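/- With ℤ₂ coefficients: in the 2-complex W = S ∖ (σ₁₁₁ ∪ σ₂₂₂ ∪ σ₃₃₃), where S is the link of the center point in the cube of the tripod T³, the sum of the three boundary loops satisfies [∂σ₁₁₁] + [∂σ₂₂₂] + [∂σ₃₃₃] = 0 in H₁(W; ℤ₂); explicitly, the 2-chain B′ + B″ (where B′ is the sum of σ_ijk over all triples of pairwise distinct indices and B″ = Σᵢ (σ_{ii(i+1)} + σ_{i(i+1)i} + σ_{(i+1)ii}) with indices mod 3) has boundary ∂(B′ + B″) = ∂σ₁₁₁ + ∂σ₂₂₂ + ∂σ₃₃₃ as a ℤ₂ 1-chain. -/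

import Mathlib

/-!
Read the legs as `ZMod 3`, so that a triangle `σ_ijk` has a leg sum `i + j + k`. The triangles
of `B′` and the diagonal ones have leg sum `0`, those of `B″` have leg sum `1`, and together they
are exactly the triangles off the plane `i + j + k = 2`. An edge of `S` is a side of exactly three
triangles, one for each value of the leg in the opposite slot, and exactly one of them lies on the
plane; so every edge is a side of two triangles off the plane, whose chain is therefore a cycle
mod 2.
-/

/-- Edges of the complex `S`: the edge `(m, a, b)` of a triangle `σ_ijk` is the
side opposite to the slot `m ∈ {0,1,2}`, joining the vertex in the first
remaining slot on leg `a` to the vertex in the second remaining slot on leg `b`. -/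
abbrev TripodEdge := Fin 3 × Fin 3 × Fin 3

/-- The `ℤ₂`-boundary of the triangle `σ_ijk` (legs `(i,j,k)` indexed by slot),
as a `ℤ₂` 1-chain on the edges of `S`: the sum of its three sides. -/
def bd (t : Fin 3 × Fin 3 × Fin 3) : TripodEdge → ZMod 2 := fun e =>
  (if e = (0, t.2.1, t.2.2) then 1 else 0) +
  (if e = (1, t.1, t.2.2) then 1 else 0) +
  (if e = (2, t.1, t.2.1) then 1 else 0)

open Finset

/-- The triangle with leg `c` in slot `e.1` whose side opposite that slot is `e`. -/
def TripodEdge.coface (e : TripodEdge) (c : Fin 3) : Fin 3 × Fin 3 × Fin 3 :=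
  ![(c, e.2.1, e.2.2), (e.2.1, c, e.2.2), (e.2.1, e.2.2, c)] e.1

def chainBoundary : (Fin 3 × Fin 3 × Fin 3 → ZMod 2) →ₗ[ZMod 2] TripodEdge → ZMod 2 :=
  Fintype.linearCombination (ZMod 2) bd

theorem chainBoundary_single (t : Fin 3 × Fin 3 × Fin 3) :
    chainBoundary (Pi.single t 1) = bd t := by
  simp [chainBoundary]

theorem chainBoundary_apply (χ : Fin 3 × Fin 3 × Fin 3 → ZMod 2) (e : TripodEdge) :
    chainBoundary χ e = ∑ c, χ (e.coface c) := by
  obtain ⟨m, a, b⟩ := e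
  simp only [chainBoundary, Fintype.linearCombination_apply, Finset.sum_apply, Pi.smul_apply,
    smul_eq_mul, Fintype.sum_prod_type, bd]
  fin_cases m <;> simp [TripodEdge.coface, ite_and, sum_ite_eq, eq_comm]

def legSum (t : Fin 3 × Fin 3 × Fin 3) : Fin 3 := t.1 + t.2.1 + t.2.2

theorem legSum_coface (e : TripodEdge) (c : Fin 3) :
    legSum (e.coface c) = c + (e.2.1 + e.2.2) := by
  obtain ⟨m, a, b⟩ := e
  fin_cases m <;> simp [TripodEdge.coface, legSum] <;> abel

def offPlane (r : Fin 3) : Fin 3 × Fin 3 × Fin 3 → ZMod 2 :=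
  fun t => if legSum t = r then 0 else 1

theorem chainBoundary_offPlane (r : Fin 3) : chainBoundary (offPlane r) = 0 := by
  funext e
  simp only [chainBoundary_apply, offPlane, legSum_coface, ← eq_sub_iff_add_eq]
  simp only [sum_ite, sum_const_zero, filter_ne', sum_const, mem_univ, card_erase_of_mem,
    card_univ, Fintype.card_fin, Nat.add_one_sub_one, nsmul_eq_mul, Nat.cast_ofNat, mul_one,
    zero_add, Pi.zero_apply]
  decide

/-- In `W = S ∖ (σ₁₁₁ ∪ σ₂₂₂ ∪ σ₃₃₃)`, the `ℤ₂` 2-chain `B′ + B″` — where `B′`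
is the sum of the `σ_ijk` over all triples of pairwise distinct indices and
`B″ = Σᵢ (σ_{ii(i+1)} + σ_{i(i+1)i} + σ_{(i+1)ii})` (indices mod 3) — has
boundary `∂σ₁₁₁ + ∂σ₂₂₂ + ∂σ₃₃₃`; hence `[∂σ₁₁₁] + [∂σ₂₂₂] + [∂σ₃₃₃] = 0` in
`H₁(W; ℤ₂)`. -/
theorem boundary_sum_of_diagonal_triangles :
    (∑ t ∈ Finset.univ.filter
        (fun t : Fin 3 × Fin 3 × Fin 3 =>
          t.1 ≠ t.2.1 ∧ t.1 ≠ t.2.2 ∧ t.2.1 ≠ t.2.2), bd t) +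
      (∑ i : Fin 3, (bd (i, i, i + 1) + bd (i, i + 1, i) + bd (i + 1, i, i))) =
    bd (0, 0, 0) + bd (1, 1, 1) + bd (2, 2, 2) := by
  have hchain : ((∑ t ∈ univ.filter (fun t : Fin 3 × Fin 3 × Fin 3 =>
          t.1 ≠ t.2.1 ∧ t.1 ≠ t.2.2 ∧ t.2.1 ≠ t.2.2), Pi.single t 1) +
        ∑ i : Fin 3, (Pi.single (i, i, i + 1) 1 + Pi.single (i, i + 1, i) 1 +
          Pi.single (i + 1, i, i) 1) : Fin 3 × Fin 3 × Fin 3 → ZMod 2) =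
      Pi.single (0, 0, 0) 1 + Pi.single (1, 1, 1) 1 + Pi.single (2, 2, 2) 1 + offPlane 2 := by
    decide
  simpa only [map_add, map_sum, chainBoundary_single, chainBoundary_offPlane, add_zero] using
    congrArg chainBoundary hchain
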